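/- arXiv:2507.22743 — 5 statements merged into one kernel-verified Lean document; each statement's English description precedes it below -/
import Mathlib

section
/- Lagrange inversion formula: if f is a regular formal power series over ℂ (zero constant term, nonzero linear coefficient) with compositional inverse f⁻¹, then for every positive integer n, the coefficient of x^n in f⁻¹ equals (1/n) times the coefficient of x^{n-1} in (x/f(x))^n. -/
/-!
Write `f = X * u` with `u(0) ≠ 0` and `b k` for the coefficients of `f⁻¹`. Truncating
`f⁻¹ ∘ f = X` after the term of degree `n` gives `∑_{k ≤ n} b k f ^ k ≡ X (mod X ^ (n + 1))`;
differentiating and multiplying by `u⁻¹ ^ n` gives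
`coeff (n - 1) (u⁻¹ ^ n) = ∑_{k ≤ n} b k · coeff (n - 1) ((f ^ k)' · u⁻¹ ^ n)`.
The `k`-th summand is `k b k` times the residue of `f' / f ^ (n - k + 1)`, which is `1` for
`k = n` and `0` otherwise, leaving `n · b n`.
-/

/-- Composition of formal power series: `comp f g = f ∘ g`, intended for `g` with zero
constant coefficient. -/
noncomputable def PowerSeries.comp {R : Type*} [CommRing R] (f g : PowerSeries R) :
    PowerSeries R :=
  PowerSeries.mk fun n =>
    ∑ k ∈ Finset.range (n + 1), PowerSeries.coeff k f * PowerSeries.coeff n (g ^ k)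

namespace PowerSeries

section CommSemiring

variable {R : Type*} [CommSemiring R]

theorem coeff_pow_eq_zero_of_lt {g : R⟦X⟧} (hg : constantCoeff g = 0) {N k : ℕ} (h : N < k) :
    coeff N (g ^ k) = 0 :=
  X_pow_dvd_iff.mp (pow_dvd_pow_of_dvd (X_dvd_iff.mpr hg) k) N h

theorem X_pow_dvd_derivative {f : R⟦X⟧} {n : ℕ} (h : X ^ (n + 1) ∣ f) :
    X ^ n ∣ d⁄dX R f :=
  X_pow_dvd_iff.mpr fun N hN => by
    rw [coeff_derivative, X_pow_dvd_iff.mp h (N + 1) (by omega), zero_mul]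

end CommSemiring

section CommRing

variable {R : Type*} [CommRing R]

theorem coeff_comp_eq_coeff_sum (f : R⟦X⟧) {g : R⟦X⟧} (hg : constantCoeff g = 0) {N n : ℕ}
    (hN : N ≤ n) :
    coeff N (f.comp g) = coeff N (∑ k ∈ Finset.range (n + 1), coeff k f • g ^ k) := by
  simp only [comp, coeff_mk, map_sum, map_smul, smul_eq_mul]
  refine Finset.sum_subset (Finset.range_subset_range.mpr (by omega)) fun k _ hk => ?_
  rw [coeff_pow_eq_zero_of_lt hg (by simpa using hk), mul_zero]

end CommRing

variable {K : Type*} [Field K] [CharZero K]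

/-- With `f = X * u`, this is the residue of `f' / f ^ (m + 1)`, which vanishes for `m ≠ 0`
because it is then the residue of the derivative `-(f ^ (-m))' / m`. -/
theorem coeff_derivative_X_mul_mul_inv_pow {u : K⟦X⟧} (hu : constantCoeff u ≠ 0) (m : ℕ) :
    coeff m (d⁄dX K (X * u) * u⁻¹ ^ (m + 1)) = if m = 0 then 1 else 0 := by
  have hsplit : d⁄dX K (X * u) * u⁻¹ ^ (m + 1) = u⁻¹ ^ m + X * (d⁄dX K u * u⁻¹ ^ (m + 1)) := by
    rw [Derivation.leibniz, derivative_X, smul_eq_mul, smul_eq_mul]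
    linear_combination u⁻¹ ^ m * PowerSeries.mul_inv_cancel u hu
  rw [hsplit, map_add]
  cases m with
  | zero => simp [coeff_zero_eq_constantCoeff]
  | succ m =>
    have hD : d⁄dX K (u⁻¹ ^ (m + 1)) = -((m + 1 : K) • (d⁄dX K u * u⁻¹ ^ (m + 2))) := by
      rw [derivative_pow, derivative_inv', smul_eq_C_mul]
      simp only [map_add, map_one, map_natCast]
      push_cast
      ring
    have hcoeff := congrArg (coeff m) hD
    rw [coeff_derivative, map_neg, map_smul, smul_eq_mul] at hcoeff
    rw [coeff_succ_X_mul, if_neg m.succ_ne_zero]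
    apply mul_right_cancel₀ (Nat.cast_add_one_ne_zero m : (m + 1 : K) ≠ 0)
    linear_combination hcoeff

theorem coeff_pred_derivative_X_mul_pow_mul_inv_pow {u : K⟦X⟧} (hu : constantCoeff u ≠ 0)
    {k n : ℕ} (hk : k ≤ n) :
    coeff (n - 1) (d⁄dX K ((X * u) ^ k) * u⁻¹ ^ n) = if k = n then (n : K) else 0 := by
  obtain ⟨d, rfl⟩ := Nat.exists_eq_add_of_le hk
  cases k with
  | zero => rcases d with _ | d <;> simp
  | succ j =>
    have hfactor : d⁄dX K ((X * u) ^ (j + 1)) * u⁻¹ ^ (j + 1 + d) =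
        (j + 1 : K) • (X ^ j * (d⁄dX K (X * u) * u⁻¹ ^ (d + 1))) := by
      calc _ = (j + 1 : K) • ((u * u⁻¹) ^ j * (X ^ j * (d⁄dX K (X * u) * u⁻¹ ^ (d + 1)))) := by
            rw [derivative_pow, smul_eq_C_mul]
            simp only [map_add, map_one, map_natCast]
            push_cast
            ring
        _ = _ := by rw [PowerSeries.mul_inv_cancel u hu, one_pow, one_mul]
    rw [hfactor, map_smul, show j + 1 + d - 1 = d + j by omega, coeff_X_pow_mul,
      coeff_derivative_X_mul_mul_inv_pow hu]
    by_cases hd : d = 0 <;> simp [hd]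

theorem coeff_pred_derivative_sum_mul_inv_pow {u : K⟦X⟧} (hu : constantCoeff u ≠ 0)
    (b : ℕ → K) (n : ℕ) :
    coeff (n - 1) (d⁄dX K (∑ k ∈ Finset.range (n + 1), b k • (X * u) ^ k) * u⁻¹ ^ n) =
      b n * n := by
  simp only [map_sum, Derivation.map_smul, Finset.sum_mul, smul_mul_assoc, map_smul, smul_eq_mul]
  rw [Finset.sum_congr rfl fun k hk =>
      congrArg (b k * ·)
        (coeff_pred_derivative_X_mul_pow_mul_inv_pow hu (Finset.mem_range_succ_iff.mp hk))]
  simp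

end PowerSeries

open PowerSeries

theorem stmt_1 (f fi : PowerSeries ℂ)
    (h0 : PowerSeries.coeff 0 f = 0) (h1 : PowerSeries.coeff 1 f ≠ 0)
    (hfi : f.comp fi = PowerSeries.X ∧ fi.comp f = PowerSeries.X)
    (n : ℕ) (hn : 0 < n) :
    PowerSeries.coeff n fi =
      (1 / (n : ℂ)) *
        PowerSeries.coeff (n - 1)
          ((PowerSeries.mk fun m => PowerSeries.coeff (m + 1) f)⁻¹ ^ n) := by
  set u : ℂ⟦X⟧ := mk fun m => coeff (m + 1) f
  have hu : constantCoeff u ≠ 0 := by simpa [u] using h1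
  have hf : f = X * u := by
    rw [eq_X_mul_shift_add_const f, ← coeff_zero_eq_constantCoeff_apply, h0, map_zero, add_zero]
  have hP : X ^ (n + 1) ∣ ∑ k ∈ Finset.range (n + 1), coeff k fi • (X * u) ^ k - X := by
    rw [← hf]
    refine X_pow_dvd_iff.mpr fun N hN => ?_
    rw [map_sub, ← coeff_comp_eq_coeff_sum fi (by simpa using h0) (by omega), hfi.2, sub_self]
  have hcoeff := X_pow_dvd_iff.mp (dvd_mul_of_dvd_left (X_pow_dvd_derivative hP) (u⁻¹ ^ n))
    (n - 1) (by omega)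
  rw [map_sub, derivative_X, sub_mul, one_mul, map_sub, sub_eq_zero,
    coeff_pred_derivative_sum_mul_inv_pow hu] at hcoeff
  rw [← hcoeff, one_div_mul_eq_div, mul_div_cancel_right₀ _ (Nat.cast_ne_zero.mpr hn.ne')]
end

section
/- Let f and g be distinct regular formal power series over ℂ, both with linear coefficient 1. Then ord(f − g) = ord(g⁻¹ − f⁻¹) and the leading coefficient of f − g equals the leading coefficient of g⁻¹ − f⁻¹, where ord denotes the order (minimal degree with nonzero coefficient) and the leading coefficient of a nonzero series h is [x^{ord(h)}]h. -/
/-!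
Put `h = g⁻¹ - f⁻¹`. Since `f⁻¹ ∘ f = X = g⁻¹ ∘ g`, we get `h ∘ f = g⁻¹ ∘ f - g⁻¹ ∘ g`. Writing
`g⁻¹ = ∑ cⱼ xʲ` with `c₁ = 1`, the right side is `∑ cⱼ (fʲ - gʲ)`, and for `j ≥ 2` the factor
`fʲ - gʲ = (f - g) ∑ fⁱ gʲ⁻¹⁻ⁱ` vanishes to order strictly above `ord (f - g)`; so `h ∘ f` agrees
with `f - g` up to and including degree `ord (f - g)`. On the other hand, substituting a series
`f = x + O(x²)` into `h` leaves the coefficients of `h` up to degree `ord h` unchanged. Hence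
`h`, `h ∘ f` and `f - g` have the same order and the same leading coefficient.
-/

namespace PowerSeries

variable {R : Type*} [CommRing R]

theorem coeff_comp (p f : R⟦X⟧) (n : ℕ) :
    coeff n (p.comp f) = ∑ j ∈ Finset.range (n + 1), coeff j p * coeff n (f ^ j) :=
  coeff_mk _ _

theorem sub_comp (p q f : R⟦X⟧) : (p - q).comp f = p.comp f - q.comp f := by
  ext n
  simp only [coeff_comp, map_sub, sub_mul, Finset.sum_sub_distrib]

theorem coeff_self_pow_of_constantCoeff_eq_zero {f : R⟦X⟧} (hf : constantCoeff f = 0) (n : ℕ) :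
    coeff n (f ^ n) = coeff 1 f ^ n := by
  obtain ⟨F, rfl⟩ := X_dvd_iff.mpr hf
  rw [mul_pow, coeff_X_pow_mul', if_pos le_rfl, Nat.sub_self, coeff_zero_eq_constantCoeff_apply,
    map_pow, ← coeff_zero_eq_constantCoeff_apply, ← coeff_succ_X_mul]

theorem coeff_one_comp (p f : R⟦X⟧) : coeff 1 (p.comp f) = coeff 1 p * coeff 1 f := by
  simp [coeff_comp, Finset.sum_range_succ]

theorem coeff_comp_of_le_order (p : R⟦X⟧) {f : R⟦X⟧} (hf0 : constantCoeff f = 0)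
    (hf1 : coeff 1 f = 1) {n : ℕ} (hn : (n : ℕ∞) ≤ p.order) :
    coeff n (p.comp f) = coeff n p := by
  rw [coeff_comp, Finset.sum_range_succ, coeff_self_pow_of_constantCoeff_eq_zero hf0, hf1,
    one_pow, mul_one, add_eq_right]
  refine Finset.sum_eq_zero fun j hj => ?_
  rw [coeff_of_lt_order j ((Nat.cast_lt.mpr (Finset.mem_range.mp hj)).trans_le hn), zero_mul]

theorem order_sub_add_one_le_order_pow_sub_pow {f g : R⟦X⟧} (hf : constantCoeff f = 0)
    (hg : constantCoeff g = 0) {j : ℕ} (hj : 2 ≤ j) :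
    (f - g).order + 1 ≤ (f ^ j - g ^ j).order := by
  rw [← geom_sum₂_mul, mul_comm]
  refine le_trans (add_le_add_right (one_le_order_iff_constCoeff_eq_zero.mpr ?_) _)
    (le_order_mul _ _)
  simp only [map_sum, map_mul, map_pow, hf, hg]
  refine Finset.sum_eq_zero fun i hi => ?_
  rcases Nat.eq_zero_or_pos i with rfl | hi0
  · rw [zero_pow (show j - 1 - 0 ≠ 0 by omega), mul_zero]
  · rw [zero_pow hi0.ne', zero_mul]

theorem coeff_comp_sub_comp_of_le_order (p : R⟦X⟧) {f g : R⟦X⟧} (hf : constantCoeff f = 0)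
    (hg : constantCoeff g = 0) {n : ℕ} (hn : (n : ℕ∞) ≤ (f - g).order) :
    coeff n (p.comp f - p.comp g) = coeff 1 p * coeff n (f - g) := by
  simp only [map_sub, coeff_comp, ← Finset.sum_sub_distrib, ← mul_sub]
  rw [Finset.sum_eq_single 1, pow_one, pow_one]
  · rintro (_ | _ | j) - hj1
    · simp
    · exact absurd rfl hj1
    · have hlt : (n : ℕ∞) < (f ^ (j + 2) - g ^ (j + 2)).order :=
        ((ENat.lt_add_one_iff' (ENat.natCast_ne_top n)).mpr hn).trans_le
          (order_sub_add_one_le_order_pow_sub_pow hf hg (by omega))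
      rw [← map_sub, coeff_of_lt_order n hlt, mul_zero]
  · intro h1
    obtain rfl : n = 0 := by simpa using h1
    simp [coeff_zero_eq_constantCoeff_apply, hf, hg]

theorem order_eq_of_coeff_eq {φ ψ : R⟦X⟧}
    (h : ∀ n : ℕ, (n : ℕ∞) ≤ φ.order → coeff n ψ = coeff n φ) : ψ.order = φ.order := by
  rw [order_eq]
  refine ⟨fun i hi => ?_, fun i hi => ?_⟩
  · rw [h i hi.le]
    exact (order_eq.mp rfl).1 i hi
  · rw [h i hi.le, coeff_of_lt_order i hi]

end PowerSeries

open PowerSeries in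
theorem stmt_4 (f g fi gi : PowerSeries ℂ) (hne : f ≠ g)
    (hf0 : PowerSeries.coeff 0 f = 0) (hf1 : PowerSeries.coeff 1 f = 1)
    (hg0 : PowerSeries.coeff 0 g = 0) (hg1 : PowerSeries.coeff 1 g = 1)
    (hfi : f.comp fi = PowerSeries.X ∧ fi.comp f = PowerSeries.X)
    (hgi : g.comp gi = PowerSeries.X ∧ gi.comp g = PowerSeries.X) :
    ∃ k : ℕ, (f - g).order = (k : ℕ∞) ∧ (gi - fi).order = (k : ℕ∞) ∧
      PowerSeries.coeff k (f - g) = PowerSeries.coeff k (gi - fi) := by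
  rw [coeff_zero_eq_constantCoeff_apply] at hf0 hg0
  have hgi1 : coeff 1 gi = 1 := by
    simpa [coeff_one_comp gi g, hg1] using congrArg (coeff 1) hgi.2
  have hcomp : (gi - fi).comp f = gi.comp f - gi.comp g := by rw [sub_comp, hfi.2, hgi.2]
  have hcomp_eq_sub (n : ℕ) (hn : (n : ℕ∞) ≤ (f - g).order) :
      coeff n ((gi - fi).comp f) = coeff n (f - g) := by
    rw [hcomp, coeff_comp_sub_comp_of_le_order gi hf0 hg0 hn, hgi1, one_mul]
  have hcomp_eq_self (n : ℕ) (hn : (n : ℕ∞) ≤ (gi - fi).order) :=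
    coeff_comp_of_le_order (gi - fi) hf0 hf1 hn
  have hord : (gi - fi).order = (f - g).order :=
    (order_eq_of_coeff_eq hcomp_eq_self).symm.trans (order_eq_of_coeff_eq hcomp_eq_sub)
  obtain ⟨k, hk⟩ :=
    ENat.ne_top_iff_exists.mp (order_finite_iff_ne_zero.mpr (sub_ne_zero.mpr hne)).ne
  refine ⟨k, hk.symm, hord.trans hk.symm, ?_⟩
  rw [← hcomp_eq_sub k hk.le, hcomp_eq_self k (hord.trans hk.symm).ge]
end

section
/- As x → 0, the real function (sin(tan x) − tan(sin x)) / (arcsin(arctan x) − arctan(arcsin x)) tends to 1. -/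
open Filter Topology Real Set

/-
Put N = sin ∘ tan - tan ∘ sin, u = arctan (arcsin x) and v = arcsin (arctan x). Since
sin (tan u) = x = tan (sin v), we get N(u) = tan (sin v) - tan (sin u), so by strict
differentiability of tan ∘ sin at 0 (derivative 1) the quotient N(u) / (v - u) tends to 1.
Since N is analytic at 0 and not identically zero there, N(z) = z^k g(z) with g(0) ≠ 0;
as u ~ x this gives N(x) / N(u) → 1.
-/

section

variable {𝕜 : Type*} [NontriviallyNormedField 𝕜]

theorem HasStrictDerivAt.tendsto_slope_comp {α : Type*} {l : Filter α} {G : 𝕜 → 𝕜} {c a : 𝕜}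
    (hG : HasStrictDerivAt G c a) {p q : α → 𝕜} (hp : Tendsto p l (𝓝 a))
    (hq : Tendsto q l (𝓝 a)) (hpq : ∀ᶠ x in l, p x ≠ q x) :
    Tendsto (fun x => (G (q x) - G (p x)) / (q x - p x)) l (𝓝 c) := by
  have hlo := (hasDerivAtFilter_iff_isLittleO.mp hG).comp_tendsto (hq.prodMk_nhds hp)
  have hlim := hlo.tendsto_div_nhds_zero.add_const c
  rw [zero_add] at hlim
  refine hlim.congr' ?_
  filter_upwards [hpq] with x hx
  have : q x - p x ≠ 0 := sub_ne_zero.mpr hx.symm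
  simp only [Function.comp, smul_eq_mul]
  field_simp
  ring

theorem HasDerivAt.tendsto_div_self {u : 𝕜 → 𝕜} {c : 𝕜} (hu : HasDerivAt u c 0) (hu0 : u 0 = 0) :
    Tendsto (fun x => u x / x) (𝓝[≠] 0) (𝓝 c) :=
  hu.tendsto_slope.congr fun x => by simp [slope_def_field, hu0]

theorem AnalyticAt.tendsto_div_comp_of_tendsto_div {f u : 𝕜 → 𝕜} (hf : AnalyticAt 𝕜 f 0)
    (hf0 : ¬∀ᶠ z in 𝓝 0, f z = 0) (hu : Tendsto (fun x => u x / x) (𝓝[≠] 0) (𝓝 1)) :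
    Tendsto (fun x => f x / f (u x)) (𝓝[≠] 0) (𝓝 1) := by
  obtain ⟨n, g, hg, hg0, hfg⟩ := hf.exists_eventuallyEq_pow_smul_nonzero_iff.mpr hf0
  have hu0 : Tendsto u (𝓝[≠] 0) (𝓝 0) := by
    have hprod := hu.mul (tendsto_nhdsWithin_of_tendsto_nhds (tendsto_id (x := 𝓝 (0 : 𝕜))))
    rw [one_mul] at hprod
    refine hprod.congr' ?_
    filter_upwards [self_mem_nhdsWithin] with x hx
    exact div_mul_cancel₀ _ hx
  have hgx : Tendsto g (𝓝[≠] 0) (𝓝 (g 0)) := hg.continuousAt.tendsto.mono_left nhdsWithin_le_nhds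
  have hgu : Tendsto (g ∘ u) (𝓝[≠] 0) (𝓝 (g 0)) := hg.continuousAt.tendsto.comp hu0
  have hlim := ((hu.inv₀ one_ne_zero).pow n).mul (hgx.div hgu hg0)
  rw [inv_one, one_pow, div_self hg0, one_mul] at hlim
  refine hlim.congr' ?_
  filter_upwards [hfg.filter_mono nhdsWithin_le_nhds, hu0.eventually hfg] with x hx hux
  simp only [sub_zero, smul_eq_mul] at hx hux
  rw [hx, hux, inv_div, div_pow, Pi.div_apply, Function.comp_apply, div_mul_div_comm]

end

namespace Real

theorem analyticAt_tan {x : ℝ} (hx : cos x ≠ 0) : AnalyticAt ℝ tan x :=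
  (analyticAt_sin.div analyticAt_cos hx).congr
    (Eventually.of_forall fun y => (tan_eq_sin_div_cos y).symm)

theorem cos_sin_pos (x : ℝ) : 0 < cos (sin x) :=
  cos_pos_of_mem_Ioo ⟨by linarith [neg_one_le_sin x, pi_gt_three],
    by linarith [sin_le_one x, pi_gt_three]⟩

theorem sin_tan_sub_tan_sin_arctan_arcsin {x : ℝ} (hx : x ∈ Icc (-1) 1) :
    sin (tan (arctan (arcsin x))) - tan (sin (arctan (arcsin x))) =
      tan (sin (arcsin (arctan x))) - tan (sin (arctan (arcsin x))) := by
  have harctan : arctan x ∈ Icc (-(π / 4)) (π / 4) := by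
    rw [← arctan_one, ← arctan_neg]
    exact ⟨arctan_strictMono.monotone hx.1, arctan_strictMono.monotone hx.2⟩
  rw [tan_arctan, sin_arcsin hx.1 hx.2,
    sin_arcsin (by linarith [harctan.1, pi_lt_four]) (by linarith [harctan.2, pi_lt_four]),
    tan_arctan]

theorem analyticAt_sin_tan_sub_tan_sin {x : ℝ} (hx : cos x ≠ 0) :
    AnalyticAt ℝ (fun x => sin (tan x) - tan (sin x)) x :=
  (analyticAt_sin.comp (analyticAt_tan hx)).sub
    ((analyticAt_tan (cos_sin_pos x).ne').comp analyticAt_sin)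

theorem not_eventually_sin_tan_sub_tan_sin_eq_zero :
    ¬∀ᶠ x in 𝓝 (0 : ℝ), sin (tan x) - tan (sin x) = 0 := by
  intro h
  have hanalytic : AnalyticOnNhd ℝ (fun x => sin (tan x) - tan (sin x)) (Ioo (-(π / 2)) (π / 2)) :=
    fun x hx => analyticAt_sin_tan_sub_tan_sin (cos_pos_of_mem_Ioo hx).ne'
  have hzero := hanalytic.eqOn_zero_of_preconnected_of_eventuallyEq_zero isPreconnected_Ioo
    ⟨by linarith [pi_pos], by linarith [pi_pos]⟩ h
  -- at x₀ = arcsin (4/5) one has tan (sin x₀) = tan (4/5) > tan (π/4) = 1 ≥ sin (tan x₀)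
  have hx₀ : arcsin (4 / 5) ∈ Ioo (-(π / 2)) (π / 2) :=
    ⟨neg_pi_div_two_lt_arcsin.2 (by norm_num), arcsin_lt_pi_div_two.2 (by norm_num)⟩
  have htan : 1 < tan (4 / 5) := by
    rw [← tan_pi_div_four]
    exact tan_lt_tan_of_lt_of_lt_pi_div_two (by linarith [pi_pos]) (by linarith [pi_gt_three])
      (by linarith [pi_lt_d2])
  have := hzero hx₀
  simp only [Pi.zero_apply, sin_arcsin (by norm_num : (-1 : ℝ) ≤ 4 / 5) (by norm_num)] at this
  linarith [sin_le_one (tan (arcsin (4 / 5)))]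

end Real

theorem stmt_10 :
    Filter.Tendsto
      (fun x : ℝ =>
        (Real.sin (Real.tan x) - Real.tan (Real.sin x)) /
          (Real.arcsin (Real.arctan x) - Real.arctan (Real.arcsin x)))
      (nhdsWithin 0 {0}ᶜ) (nhds 1) := by
  set N := fun x : ℝ => sin (tan x) - tan (sin x)
  set u := fun x : ℝ => arctan (arcsin x)
  set v := fun x : ℝ => arcsin (arctan x)
  have hu_deriv : HasDerivAt (arctan ∘ arcsin) 1 0 := by
    simpa using
      (hasDerivAt_arctan _).comp 0 (hasDerivAt_arcsin (x := 0) (by norm_num) (by norm_num))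
  have hN : Tendsto (fun x => N x / N (u x)) (𝓝[≠] 0) (𝓝 1) :=
    (analyticAt_sin_tan_sub_tan_sin (by simp)).tendsto_div_comp_of_tendsto_div
      not_eventually_sin_tan_sub_tan_sin_eq_zero (hu_deriv.tendsto_div_self (by simp))
  -- a ratio with vanishing denominator is 0 in Lean, so it cannot tend to 1
  have hNu : ∀ᶠ x in 𝓝[≠] 0, N (u x) ≠ 0 :=
    (hN.eventually_ne one_ne_zero).mono fun x hx hzero => hx (by rw [hzero, div_zero])
  have hNu_eq : ∀ᶠ x in 𝓝[≠] 0, N (u x) = tan (sin (v x)) - tan (sin (u x)) := by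
    filter_upwards [nhdsWithin_le_nhds (Icc_mem_nhds (by norm_num : (-1 : ℝ) < 0) one_pos)]
      with x hx using sin_tan_sub_tan_sin_arctan_arcsin hx
  have hG : HasStrictDerivAt (tan ∘ sin) 1 0 := by
    simpa using (hasStrictDerivAt_tan (by simp)).comp 0 (hasStrictDerivAt_sin 0)
  have hu : Tendsto u (𝓝[≠] 0) (𝓝 0) :=
    ((continuous_arctan.comp continuous_arcsin).tendsto' 0 0 (by simp)).mono_left nhdsWithin_le_nhds
  have hv : Tendsto v (𝓝[≠] 0) (𝓝 0) :=
    ((continuous_arcsin.comp continuous_arctan).tendsto' 0 0 (by simp)).mono_left nhdsWithin_le_nhds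
  have hslope := hG.tendsto_slope_comp hu hv (by
    filter_upwards [hNu, hNu_eq] with x hx heq huv using hx (by rw [heq, huv, sub_self]))
  have hprod := hN.mul hslope
  rw [one_mul] at hprod
  refine hprod.congr' ?_
  filter_upwards [hNu, hNu_eq] with x hx heq
  simp only [Function.comp_apply, ← heq]
  exact div_mul_div_cancel₀ hx
end

section
/- As x → 0 with x ≠ 0, (sin(tan x) − tan(sin x)) / x^7 tends to −1/30. -/
/-!
Let `S`, `C`, `T` be the degree-7 Taylor polynomials of `sin`, `cos`, `tan` at `0`. The alternating
series give `sin = S + O(y⁹)` and `cos = C + O(y⁸)`, and since `C T - S = O(y⁹)` one gets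
`tan = (sin - cos T) / cos + T = T + o(y⁷)`. Expansions compose: an outer polynomial is locally
Lipschitz and the inner functions are `O(x)`, so
`sin (tan x) - tan (sin x) = S (T x) - T (S x) + o(x⁷)`. Finally `S ∘ T - T ∘ S` is a polynomial
divisible by `x⁷` whose `x⁷`-coefficient is `-1/30`.
-/

open Real Filter Asymptotics Topology Finset
open scoped Nat

lemma abs_pow_div_factorial_le {x : ℝ} (hx : |x| ≤ 1) {m n k : ℕ} (hm : m ≤ k) (hn : 2 * n ≤ k) :
    |x| ^ k / k ! ≤ |x| ^ m * (1 / 2) ^ n := by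
  have hfact : 2 ^ n ≤ k ! :=
    calc 2 ^ n ≤ 2 ^ n * n ! := Nat.le_mul_of_pos_right _ n.factorial_pos
      _ ≤ (2 * n)! := Nat.two_pow_mul_factorial_le_factorial_two_mul n
      _ ≤ k ! := Nat.factorial_le hn
  rw [one_div, inv_pow, ← div_eq_mul_inv]
  exact div_le_div₀ (by positivity) (pow_le_pow_of_le_one (abs_nonneg x) hx hm) (by positivity)
    (by exact_mod_cast hfact)

lemma isBigO_sub_sum_range_of_hasSum_alternating {f : ℝ → ℝ} (e N : ℕ)
    (hf : ∀ x : ℝ, HasSum (fun n => (-1) ^ n * x ^ (2 * n + e) / (2 * n + e)!) (f x)) :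
    (fun x => f x - ∑ n ∈ range N, (-1) ^ n * x ^ (2 * n + e) / (2 * n + e)!)
      =O[𝓝 0] fun x => x ^ (2 * N + e) := by
  refine IsBigO.of_bound 2 ?_
  filter_upwards [Metric.closedBall_mem_nhds (0 : ℝ) one_pos] with x hx
  rw [Metric.mem_closedBall, dist_zero_right, Real.norm_eq_abs] at hx
  set a : ℕ → ℝ := fun n => (-1) ^ n * x ^ (2 * n + e) / (2 * n + e)!
  have htail : HasSum (fun n => a (n + N)) (f x - ∑ n ∈ range N, a n) :=
    (hasSum_nat_add_iff' N).mpr (hf x)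
  have hbound : ∀ n, ‖a (n + N)‖ ≤ |x| ^ (2 * N + e) * (1 / 2) ^ n := fun n => by
    simpa [a, abs_div, abs_mul, abs_pow] using
      abs_pow_div_factorial_le hx (m := 2 * N + e) (n := n) (k := 2 * (n + N) + e)
        (by omega) (by omega)
  have hgeom : HasSum (fun n : ℕ => |x| ^ (2 * N + e) * (1 / 2) ^ n) (|x| ^ (2 * N + e) * 2) := by
    simpa using (hasSum_geometric_two).mul_left (|x| ^ (2 * N + e))
  have := htail.norm_le_of_bounded hgeom hbound
  simpa [abs_pow, mul_comm] using this

lemma ContDiffAt.isBigO_comp_sub_comp {E F α : Type*} [NormedAddCommGroup E] [NormedSpace ℝ E]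
    [NormedAddCommGroup F] [NormedSpace ℝ F] {p : E → F} {a : E} (hp : ContDiffAt ℝ 1 p a)
    {l : Filter α} {u v : α → E} (hu : Tendsto u l (𝓝 a)) (hv : Tendsto v l (𝓝 a)) :
    (fun x => p (u x) - p (v x)) =O[l] fun x => u x - v x := by
  obtain ⟨K, t, ht, hK⟩ := hp.exists_lipschitzOnWith
  refine IsBigO.of_bound K ?_
  filter_upwards [hu ht, hv ht] with x hut hvt
  simpa [dist_eq_norm] using hK.dist_le_mul _ hut _ hvt

lemma isLittleO_comp_sub_comp {f g p q : ℝ → ℝ} {n : ℕ}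
    (hf : (fun y => f y - p y) =o[𝓝 0] fun y => y ^ n)
    (hg : (fun x => g x - q x) =o[𝓝 0] fun x => x ^ n)
    (hp : ContDiffAt ℝ 1 p 0) (hg_diff : DifferentiableAt ℝ g 0) (hg0 : g 0 = 0)
    (hq : ContinuousAt q 0) (hq0 : q 0 = 0) :
    (fun x => f (g x) - p (q x)) =o[𝓝 0] fun x => x ^ n := by
  have hgO : g =O[𝓝 0] fun x => x := by simpa [hg0] using hg_diff.isBigO_sub
  have hg_tendsto : Tendsto g (𝓝 0) (𝓝 0) := hgO.trans_tendsto tendsto_id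
  have hq_tendsto : Tendsto q (𝓝 0) (𝓝 0) := by simpa [hq0] using hq.tendsto
  have hfg : (fun x => f (g x) - p (g x)) =o[𝓝 0] fun x => x ^ n :=
    (hf.comp_tendsto hg_tendsto).trans_isBigO (hgO.pow n)
  have hpq : (fun x => p (g x) - p (q x)) =o[𝓝 0] fun x => x ^ n :=
    (hp.isBigO_comp_sub_comp hg_tendsto hq_tendsto).trans_isLittleO hg
  simpa using hfg.add hpq

lemma tendsto_div_pow_of_isLittleO {f G : ℝ → ℝ} {n : ℕ}
    (hf : (fun x => f x - x ^ n * G x) =o[𝓝 0] fun x => x ^ n) (hG : ContinuousAt G 0) :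
    Tendsto (fun x => f x / x ^ n) (𝓝[≠] 0) (𝓝 (G 0)) := by
  have hlim : Tendsto (fun x => (f x - x ^ n * G x) / x ^ n + G x) (𝓝[≠] 0) (𝓝 (0 + G 0)) :=
    (hf.tendsto_div_nhds_zero.add hG.tendsto).mono_left nhdsWithin_le_nhds
  rw [zero_add] at hlim
  refine hlim.congr' ?_
  filter_upwards [self_mem_nhdsWithin] with x hx
  have hxn : x ^ n ≠ 0 := pow_ne_zero n hx
  field_simp
  ring

noncomputable def sinTaylor (y : ℝ) : ℝ := y - y ^ 3 / 6 + y ^ 5 / 120 - y ^ 7 / 5040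

noncomputable def cosTaylor (y : ℝ) : ℝ := 1 - y ^ 2 / 2 + y ^ 4 / 24 - y ^ 6 / 720

noncomputable def tanTaylor (y : ℝ) : ℝ := y + y ^ 3 / 3 + 2 * y ^ 5 / 15 + 17 * y ^ 7 / 315

lemma sin_sub_sinTaylor_isLittleO : (fun y => sin y - sinTaylor y) =o[𝓝 0] fun y => y ^ 7 := by
  have h := isBigO_sub_sum_range_of_hasSum_alternating 1 4 Real.hasSum_sin
  have hsum : ∀ y : ℝ, ∑ n ∈ range 4, (-1) ^ n * y ^ (2 * n + 1) / (2 * n + 1)! = sinTaylor y := by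
    intro y
    simp only [sum_range_succ, sum_range_zero, sinTaylor]
    norm_num [Nat.factorial]
    ring
  simp only [hsum] at h
  exact h.trans_isLittleO (isLittleO_pow_pow (by norm_num))

lemma cos_sub_cosTaylor_isLittleO : (fun y => cos y - cosTaylor y) =o[𝓝 0] fun y => y ^ 7 := by
  have h := isBigO_sub_sum_range_of_hasSum_alternating 0 4 (by simpa using Real.hasSum_cos)
  have hsum : ∀ y : ℝ, ∑ n ∈ range 4, (-1) ^ n * y ^ (2 * n + 0) / (2 * n + 0)! = cosTaylor y := by
    intro y
    simp only [sum_range_succ, sum_range_zero, cosTaylor]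
    norm_num [Nat.factorial]
    ring
  simp only [hsum] at h
  exact h.trans_isLittleO (isLittleO_pow_pow (by norm_num))

lemma cosTaylor_mul_tanTaylor_sub_sinTaylor (y : ℝ) :
    cosTaylor y * tanTaylor y - sinTaylor y
      = y ^ 9 * (-331 / 15120 + 13 / 6300 * y ^ 2 - 17 / 226800 * y ^ 4) := by
  unfold cosTaylor tanTaylor sinTaylor
  ring

lemma tan_sub_tanTaylor_isLittleO : (fun y => tan y - tanTaylor y) =o[𝓝 0] fun y => y ^ 7 := by
  have hcos : Tendsto cos (𝓝 0) (𝓝 1) := by simpa using continuous_cos.tendsto 0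
  have hP : tanTaylor =O[𝓝 0] fun _ => (1 : ℝ) := by
    have : Continuous tanTaylor := by unfold tanTaylor; fun_prop
    exact (this.tendsto 0).isBigO_one ℝ
  have hdefect : (fun y : ℝ => cosTaylor y * tanTaylor y - sinTaylor y)
      =o[𝓝 0] fun y => y ^ 7 := by
    have hQ : Continuous fun y : ℝ => -331 / 15120 + 13 / 6300 * y ^ 2 - 17 / 226800 * y ^ 4 := by
      fun_prop
    simpa [cosTaylor_mul_tanTaylor_sub_sinTaylor] using
      (isLittleO_pow_pow (𝕜 := ℝ) (show 7 < 9 by norm_num)).mul_isBigO ((hQ.tendsto 0).isBigO_one ℝ)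
  have hnum : (fun y => sin y - cos y * tanTaylor y) =o[𝓝 0] fun y => y ^ 7 := by
    have hcosP : (fun y => (cos y - cosTaylor y) * tanTaylor y) =o[𝓝 0] fun y => y ^ 7 := by
      simpa using cos_sub_cosTaylor_isLittleO.mul_isBigO hP
    refine ((sin_sub_sinTaylor_isLittleO.sub hcosP).sub hdefect).congr_left fun y => ?_
    ring
  have hquot : (fun y => (sin y - cos y * tanTaylor y) * (cos y)⁻¹) =o[𝓝 0] fun y => y ^ 7 := by
    simpa using hnum.mul_isBigO ((hcos.inv₀ one_ne_zero).isBigO_one ℝ)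
  refine hquot.congr' ?_ EventuallyEq.rfl
  filter_upwards [hcos.eventually_ne one_ne_zero] with y hy
  rw [tan_eq_sin_div_cos]
  field_simp

-- `(sinTaylor ∘ tanTaylor - tanTaylor ∘ sinTaylor) / x ^ 7`; the two agree to order 6.
noncomputable def sinTanTaylorQuot (x : ℝ) : ℝ :=
  (-1/30) +
  (-29/756) * x ^ 2 +
  (-14267/302400) * x ^ 4 +
  (1889/362880) * x ^ 6 +
  (-1952317/762048000) * x ^ 8 +
  (165377/101606400) * x ^ 10 +
  (14363203/27433728000) * x ^ 12 +
  (86575319/384072192000) * x ^ 14 +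
  (46122977/960180480000) * x ^ 16 +
  (-230943421/115221657600000) * x ^ 18 +
  (-4411819403/576108288000000) * x ^ 20 +
  (-4954854589/1075402137600000) * x ^ 22 +
  (-5675457516527/2903585771520000000) * x ^ 24 +
  (-776379118091/1161434308608000000) * x ^ 26 +
  (-159492145985209/813004016025600000000) * x ^ 28 +
  (-6954577460549/139372117032960000000) * x ^ 30 +
  (-107249555048039/9756048192307200000000) * x ^ 32 +
  (-2748502750001/1300806425640960000000) * x ^ 34 +
  (-24129856177877/70243546984611840000000) * x ^ 36 +
  (-44598669076771/983409657784565760000000) * x ^ 38 +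
  (-4999521096641/1092677397538406400000000) * x ^ 40 +
  (-109275246826577/413032056269517619200000000) * x ^ 42

lemma sinTaylor_tanTaylor_sub_tanTaylor_sinTaylor (x : ℝ) :
    sinTaylor (tanTaylor x) - tanTaylor (sinTaylor x) = x ^ 7 * sinTanTaylorQuot x := by
  unfold sinTaylor tanTaylor sinTanTaylorQuot
  ring

theorem stmt_11 :
    Filter.Tendsto
      (fun x : ℝ => (Real.sin (Real.tan x) - Real.tan (Real.sin x)) / x ^ 7)
      (nhdsWithin 0 {0}ᶜ) (nhds (-1 / 30)) := by
  have hsin_tan : (fun x => sin (tan x) - sinTaylor (tanTaylor x)) =o[𝓝 0] fun x => x ^ 7 :=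
    isLittleO_comp_sub_comp sin_sub_sinTaylor_isLittleO tan_sub_tanTaylor_isLittleO
      (by unfold sinTaylor; fun_prop) (differentiableAt_tan.mpr (by simp)) tan_zero
      (by unfold tanTaylor; fun_prop) (by simp [tanTaylor])
  have htan_sin : (fun x => tan (sin x) - tanTaylor (sinTaylor x)) =o[𝓝 0] fun x => x ^ 7 :=
    isLittleO_comp_sub_comp tan_sub_tanTaylor_isLittleO sin_sub_sinTaylor_isLittleO
      (by unfold tanTaylor; fun_prop) differentiableAt_sin sin_zero
      (by unfold sinTaylor; fun_prop) (by simp [sinTaylor])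
  have hexpansion : (fun x => sin (tan x) - tan (sin x) - x ^ 7 * sinTanTaylorQuot x)
      =o[𝓝 0] fun x => x ^ 7 :=
    (hsin_tan.sub htan_sin).congr_left fun x => by
      linear_combination -sinTaylor_tanTaylor_sub_tanTaylor_sinTaylor x
  have hquot : ContinuousAt sinTanTaylorQuot 0 := by unfold sinTanTaylorQuot; fun_prop
  simpa [sinTanTaylorQuot] using tendsto_div_pow_of_isLittleO hexpansion hquot
end

section
/- For all sufficiently small nonzero real x > 0, arcsin(arctan x) ≠ arctan(arcsin x); in particular the denominator in Arnold's limit is nonzero near 0. -/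
/-!
Write `f x = arcsin (arctan x) - arctan (arcsin x)`. It is real analytic on `(-1, 1)`, so if its
zeros accumulated at `0` the identity theorem would make it vanish on `(-1, 1)`, and by continuity
at `1`. But `f 1 = arcsin (π / 4) - arctan (π / 2) < 0`, since `sin (arctan (π / 2)) > π / 4`
amounts to `π ^ 2 < 12`.
-/

open Set Filter Topology

namespace Real

theorem analyticAt_arcsin {x : ℝ} (hx : x ∈ Ioo (-1) 1) : AnalyticAt ℝ arcsin x :=
  (contDiffAt_arcsin hx.1.ne' hx.2.ne).analyticAt

theorem analyticAt_arctan (x : ℝ) : AnalyticAt ℝ arctan x :=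
  contDiff_arctan.contDiffAt.analyticAt

theorem arctan_mem_Ioo_neg_one_one {x : ℝ} (hx : x ∈ Ioo (-1) 1) : arctan x ∈ Ioo (-1) 1 := by
  have hpi : π / 4 < 1 := by linarith [pi_lt_four]
  constructor
  · calc -1 < -(π / 4) := by linarith
      _ = arctan (-1) := by rw [arctan_neg, arctan_one]
      _ < arctan x := arctan_strictMono hx.1
  · calc arctan x < arctan 1 := arctan_strictMono hx.2
      _ = π / 4 := arctan_one
      _ < 1 := hpi

theorem analyticOnNhd_arcsin_arctan_sub_arctan_arcsin :
    AnalyticOnNhd ℝ (fun x ↦ arcsin (arctan x) - arctan (arcsin x)) (Ioo (-1) 1) := fun _ hx ↦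
  ((analyticAt_arcsin (arctan_mem_Ioo_neg_one_one hx)).comp (analyticAt_arctan _)).sub
    ((analyticAt_arctan _).comp (analyticAt_arcsin hx))

theorem arcsin_pi_div_four_lt_arctan_pi_div_two : arcsin (π / 4) < arctan (π / 2) := by
  have hmem : arctan (π / 2) ∈ Ioc (-(π / 2)) (π / 2) :=
    ⟨(arctan_mem_Ioo _).1, (arctan_lt_pi_div_two _).le⟩
  have hsqrt : √(1 + (π / 2) ^ 2) < 2 := by
    rw [sqrt_lt' two_pos]
    nlinarith [pi_lt_d2, pi_pos]
  rw [arcsin_lt_iff_lt_sin' hmem, sin_arctan]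
  calc π / 4 = π / 2 / 2 := by ring
    _ < π / 2 / √(1 + (π / 2) ^ 2) :=
      div_lt_div_of_pos_left (by positivity) (by positivity) hsqrt

theorem eventually_arcsin_arctan_ne_arctan_arcsin :
    ∀ᶠ x in 𝓝[≠] (0 : ℝ), arcsin (arctan x) ≠ arctan (arcsin x) := by
  by_contra hfreq
  simp only [not_eventually, not_not] at hfreq
  have hzero : EqOn (fun x ↦ arcsin (arctan x) - arctan (arcsin x)) 0 (Ioo (-1) 1) :=
    analyticOnNhd_arcsin_arctan_sub_arctan_arcsin.eqOn_zero_of_preconnected_of_frequently_eq_zero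
      isPreconnected_Ioo (by norm_num) (hfreq.mono fun _ hx ↦ sub_eq_zero.2 hx)
  have hcont : Continuous (fun x ↦ arcsin (arctan x) - arctan (arcsin x)) := by fun_prop
  have hone := hzero.of_subset_closure hcont.continuousOn continuousOn_const Ioo_subset_Icc_self
    (closure_Ioo (by norm_num)).ge (right_mem_Icc.2 (by norm_num))
  simp only [arctan_one, arcsin_one, Pi.zero_apply, sub_eq_zero] at hone
  exact arcsin_pi_div_four_lt_arctan_pi_div_two.ne hone

end Real

theorem stmt_13 :
    ∃ δ : ℝ, 0 < δ ∧ ∀ x : ℝ, 0 < |x| → |x| < δ →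
      Real.arcsin (Real.arctan x) ≠ Real.arctan (Real.arcsin x) := by
  obtain ⟨δ, hδ, hball⟩ :=
    Metric.mem_nhdsWithin_iff.1 Real.eventually_arcsin_arctan_ne_arctan_arcsin
  refine ⟨δ, hδ, fun x hx hxδ ↦ hball ⟨?_, ?_⟩⟩
  · simpa [Metric.mem_ball] using hxδ
  · simpa [abs_pos] using hx
end
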